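/- arXiv:math/9707204 — 3 statements merged into one kernel-verified Lean document; each statement's English description precedes it below -/
import Mathlib

section
/- Given a 2-rule R = (A_n, B_n : n ∈ ω) with |B_n| = 2, define the predictor π_R as in the construction: D_R = { max B_n : n }, and for ℓ = max B_n, π_ℓ(f) = f(min B_n) if |A_n| = 1, else π_ℓ(f) = 1 − f(min B_n). Theorem: if X ⊆ ω is such that its characteristic function evades (π_R, D_R) (i.e., χ_X(ℓ) ≠ π_ℓ(χ_X ↾ ℓ) for infinitely many ℓ ∈ D_R), then X follows R or ω \ X follows R. -/
private lemma inter_pair_both {S : Set ℕ} {a b : ℕ} (ha : a ∈ S) (hb : b ∈ S) :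
    S ∩ {a, b} = {a, b} := by
  ext x
  simp only [Set.mem_inter_iff, Set.mem_insert_iff, Set.mem_singleton_iff]
  constructor
  · exact fun h => h.2
  · rintro (rfl | rfl) <;> simp [ha, hb]

private lemma inter_pair_left {S : Set ℕ} {a b : ℕ} (ha : a ∈ S) (hb : b ∉ S) :
    S ∩ {a, b} = {a} := by
  ext x
  simp only [Set.mem_inter_iff, Set.mem_insert_iff, Set.mem_singleton_iff]
  constructor
  · rintro ⟨hx, rfl | rfl⟩
    · rfl
    · exact absurd hx hb
  · rintro rfl; exact ⟨ha, Or.inl rfl⟩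

private lemma inter_pair_right {S : Set ℕ} {a b : ℕ} (ha : a ∉ S) (hb : b ∈ S) :
    S ∩ {a, b} = {b} := by
  ext x
  simp only [Set.mem_inter_iff, Set.mem_insert_iff, Set.mem_singleton_iff]
  constructor
  · rintro ⟨hx, rfl | rfl⟩
    · exact absurd hx ha
    · rfl
  · rintro rfl; exact ⟨hb, Or.inr rfl⟩

private lemma inter_pair_none {S : Set ℕ} {a b : ℕ} (ha : a ∉ S) (hb : b ∉ S) :
    S ∩ {a, b} = ∅ := by
  ext x
  simp only [Set.mem_inter_iff, Set.mem_insert_iff, Set.mem_singleton_iff,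
    Set.mem_empty_iff_false, iff_false, not_and, not_or]
  intro hx
  exact ⟨fun h => ha (h ▸ hx), fun h => hb (h ▸ hx)⟩

/-- From 2-rules to predictors: given a 2-rule with `B n = {i n, j n}`, `i n < j n`,
the associated predictor at `ℓ = j n` predicts `χ_X (i n)` if `|A n| = 1` and
`1 - χ_X (i n)` otherwise.  If `χ_X` evades this predictor, i.e. for infinitely many
`n` the value `j n ∈ X` differs from the predicted value, then `X` follows the rule
or `ω \ X` follows the rule. -/
theorem stmt_10 (i j : ℕ → ℕ) (hij : ∀ n, i n < j n)
    (hdisj : Pairwise (Function.onFun Disjoint (fun n => ({i n, j n} : Set ℕ))))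
    (A : ℕ → Set ℕ) (hA : ∀ n, A n ⊆ {i n, j n}) (X : Set ℕ)
    (hevade : {n : ℕ | ¬ (j n ∈ X ↔
        (((A n).ncard = 1 ∧ i n ∈ X) ∨ ((A n).ncard ≠ 1 ∧ i n ∉ X)))}.Infinite) :
    {n : ℕ | X ∩ {i n, j n} = A n}.Infinite ∨
      {n : ℕ | Xᶜ ∩ {i n, j n} = A n}.Infinite := by
  have hne : ∀ n, i n ≠ j n := fun n => (hij n).ne
  have hAeq : ∀ n, A n = ∅ ∨ A n = {i n} ∨ A n = {j n} ∨ A n = {i n, j n} := by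
    intro n
    by_cases hi : i n ∈ A n <;> by_cases hj : j n ∈ A n
    · refine Or.inr (Or.inr (Or.inr (Set.Subset.antisymm (hA n) ?_)))
      rintro x (rfl | h)
      · exact hi
      · simp only [Set.mem_singleton_iff] at h; subst h; exact hj
    · refine Or.inr (Or.inl (Set.Subset.antisymm ?_ (Set.singleton_subset_iff.mpr hi)))
      intro x hx
      rcases hA n hx with h | h
      · simpa using h
      · simp only [Set.mem_singleton_iff] at h; subst h; exact absurd hx hj
    · refine Or.inr (Or.inr (Or.inl (Set.Subset.antisymm ?_ (Set.singleton_subset_iff.mpr hj))))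
      intro x hx
      rcases hA n hx with h | h
      · subst h; exact absurd hx hi
      · exact h
    · refine Or.inl (Set.eq_empty_iff_forall_notMem.mpr ?_)
      intro x hx
      rcases hA n hx with h | h
      · subst h; exact absurd hx hi
      · simp only [Set.mem_singleton_iff] at h; subst h; exact absurd hx hj
  have key : {n : ℕ | ¬ (j n ∈ X ↔
        (((A n).ncard = 1 ∧ i n ∈ X) ∨ ((A n).ncard ≠ 1 ∧ i n ∉ X)))} ⊆
      {n : ℕ | X ∩ {i n, j n} = A n} ∪ {n : ℕ | Xᶜ ∩ {i n, j n} = A n} := by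
    intro n hn
    simp only [Set.mem_setOf_eq] at hn
    have hij' := hne n
    simp only [Set.mem_union, Set.mem_setOf_eq]
    by_cases hiX : i n ∈ X <;> by_cases hjX : j n ∈ X <;>
      rcases hAeq n with h | h | h | h <;>
      rw [h] <;>
      simp only [h, Set.ncard_empty, Set.ncard_singleton, Set.ncard_pair hij'] at hn
    -- hiX, hjX
    · exact Or.inr (inter_pair_none (by simpa using hiX) (by simpa using hjX))
    · exfalso; apply hn; constructor <;> intro <;> simp_all
    · exfalso; apply hn; constructor <;> intro <;> simp_all
    · exact Or.inl (inter_pair_both hiX hjX)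
    -- hiX, ¬hjX
    · exfalso; apply hn; constructor <;> intro <;> simp_all
    · exact Or.inl (inter_pair_left hiX hjX)
    · exact Or.inr (inter_pair_right (by simpa using hiX) (by simpa using hjX))
    · exfalso; apply hn; constructor <;> intro <;> simp_all
    -- ¬hiX, hjX
    · exfalso; apply hn; constructor <;> intro <;> simp_all
    · exact Or.inr (inter_pair_left (by simpa using hiX) (by simpa using hjX))
    · exact Or.inl (inter_pair_right hiX hjX)
    · exfalso; apply hn; constructor <;> intro <;> simp_all
    -- ¬hiX, ¬hjX
    · exact Or.inl (inter_pair_none hiX hjX)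
    · exfalso; apply hn; constructor <;> intro <;> simp_all
    · exfalso; apply hn; constructor <;> intro <;> simp_all
    · exact Or.inr (inter_pair_both (by simpa using hiX) (by simpa using hjX))
  exact Set.infinite_union.mp (hevade.mono key)
end

section
/- Suppose F ⊆ P(ω) is a dense independent family and σ is an automorphism of F (induced by a permutation of ω) that is not the identity permutation. Then there exist pairwise distinct sets C_n ∈ F (n ∈ ω) such that for all n, C_{2n} \ C_{2n+1} ⊆ supp(σ), where supp(σ) = { m : σ(m) ≠ m }. -/
/-! Pick a point `a` moved by `σ`. Density yields infinitely many distinct `D ∈ F` containing `a`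
but not `σ a`; interleave them with their images `σ[D] ∈ F`. The sets `σ[D]` contain `σ a`, so
they differ from every `D`, and a point of `D \ σ[D]` cannot be fixed by `σ`. -/

open Function

lemma Set.diff_image_self_subset_setOf_ne {α : Type*} (f : α → α) (D : Set α) :
    D \ f '' D ⊆ {m | f m ≠ m} :=
  fun m ⟨hmD, hm⟩ hfix => hm ⟨m, hmD, hfix⟩

lemma exists_injective_interleave {β : Type*} {f g : ℕ → β} (hf : Injective f)
    (hg : Injective g) (hfg : ∀ i j, f i ≠ g j) :
    ∃ h : ℕ → β, Injective h ∧ ∀ n, h (2 * n) = f n ∧ h (2 * n + 1) = g n := by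
  let e := Equiv.natSumNatEquivNat
  have he : ∀ n, e (.inl n) = 2 * n ∧ e (.inr n) = 2 * n + 1 := fun n => by
    simp [e, Equiv.natSumNatEquivNat_apply]
  refine ⟨Sum.elim f g ∘ e.symm, (hf.sumElim hg hfg).comp e.symm.injective, fun n => ?_⟩
  rw [comp_apply, comp_apply, ← (he n).2, ← (he n).1]
  simp

lemma exists_injective_seq_mem_not_mem {α : Type*} {F : Set (Set α)}
    (hdense : ∀ s t : Finset α, Disjoint s t →
      {C : Set α | C ∈ F ∧ ↑s ⊆ C ∧ C ∩ ↑t = ∅}.Infinite)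
    {a b : α} (hab : a ≠ b) :
    ∃ D : ℕ → Set α, Injective D ∧ ∀ k, D k ∈ F ∧ a ∈ D k ∧ b ∉ D k := by
  classical
  let f := (hdense {a} {b} (Finset.disjoint_singleton.2 hab)).natEmbedding
  refine ⟨fun k => f k, Subtype.val_injective.comp f.injective, fun k => ?_⟩
  obtain ⟨hF, ha, hb⟩ := (f k).2
  refine ⟨hF, ha (by simp), fun hbD => ?_⟩
  simpa using hb.subset ⟨hbD, by simp⟩

theorem stmt_12_general (F : Set (Set ℕ))
    (hdense : ∀ s t : Finset ℕ, Disjoint s t →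
      {C : Set ℕ | C ∈ F ∧ ↑s ⊆ C ∧ C ∩ ↑t = ∅}.Infinite)
    (σ : Equiv.Perm ℕ) (hσ : σ ≠ 1)
    (hσF : ∀ C, C ∈ F ↔ σ '' C ∈ F) :
    ∃ Cs : ℕ → Set ℕ, Function.Injective Cs ∧ (∀ n, Cs n ∈ F) ∧
      ∀ n, Cs (2 * n) \ Cs (2 * n + 1) ⊆ {m : ℕ | σ m ≠ m} := by
  obtain ⟨a, ha⟩ : ∃ a, σ a ≠ a := by
    by_contra! h
    exact hσ (Equiv.ext h)
  obtain ⟨D, hD, hDF⟩ := exists_injective_seq_mem_not_mem hdense ha.symm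
  have hD_ne_image : ∀ i j, D i ≠ σ '' D j := fun i j hij =>
    (hDF i).2.2 (hij ▸ Set.mem_image_of_mem σ (hDF j).2.1)
  obtain ⟨Cs, hCs, hCs_even_odd⟩ :=
    exists_injective_interleave hD (Set.image_injective.2 σ.injective |>.comp hD) hD_ne_image
  refine ⟨Cs, hCs, fun n => ?_, fun n => ?_⟩
  · obtain ⟨k, rfl | rfl⟩ := Nat.even_or_odd' n
    · exact (hCs_even_odd k).1 ▸ (hDF k).1
    · exact (hCs_even_odd k).2 ▸ (hσF _).1 (hDF k).1
  · rw [(hCs_even_odd n).1, (hCs_even_odd n).2]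
    exact Set.diff_image_self_subset_setOf_ne σ (D n)

/-- If `F` is a dense independent family on `ω` and `σ` is a non-identity permutation of
`ω` inducing an automorphism of `F`, then there are pairwise distinct `C n ∈ F` with
`C (2n) \ C (2n+1) ⊆ supp σ` for all `n`. -/
theorem stmt_12 (F : Set (Set ℕ))
    (hdense : ∀ s t : Finset ℕ, Disjoint s t →
      {C : Set ℕ | C ∈ F ∧ ↑s ⊆ C ∧ C ∩ ↑t = ∅}.Infinite)
    (hind : ∀ F₀ F₁ : Finset (Set ℕ), ↑F₀ ⊆ F → ↑F₁ ⊆ F → Disjoint F₀ F₁ →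
      ((⋂ C ∈ F₀, C) \ ⋃ C ∈ F₁, C).Infinite)
    (σ : Equiv.Perm ℕ) (hσ : σ ≠ 1)
    (hσF : ∀ C, C ∈ F ↔ σ '' C ∈ F) :
    ∃ Cs : ℕ → Set ℕ, Function.Injective Cs ∧ (∀ n, Cs n ∈ F) ∧
      ∀ n, Cs (2 * n) \ Cs (2 * n + 1) ⊆ {m : ℕ | σ m ≠ m} :=
  stmt_12_general F hdense σ hσ hσF
end

section
/- Let k ∈ ω and define a_0 = 0, a_{n+1} = a_n + 2^n + 1. Let X ⊆ ω and suppose (S_n : n ∈ ω) is a sequence with S_n ⊆ 2^{[a_n, a_{n+1})}, |S_n| ≤ n, and χ_X ↾ [a_n, a_{n+1}) ∈ S_n for all n > 0. Then for each n > 0 there exist i_n < j_n in [a_n, a_{n+1}) such that every z ∈ S_n satisfies z(i_n) = z(j_n); and for the resulting 2-rule (A_n, B_n) with B_n = {i_n, j_n}, A_n = {i_n}, the real X does not follow the rule (X ∩ B_n ≠ A_n for all n > 0). -/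
/-- The Laver-property argument: with `a 0 = 0`, `a (n+1) = a n + 2^n + 1`, if the
slalom `S n` consists of at most `n` binary functions on `[a n, a (n+1))` and captures
`χ_X` on each interval (for `n > 0`), then for each `n > 0` there are
`i n < j n` in `[a n, a (n+1))` on which all members of `S n` agree, and `X` does not
follow the resulting 2-rule `(A n, B n) = ({i n}, {i n, j n})`. -/
theorem stmt_19 (a : ℕ → ℕ) (ha0 : a 0 = 0) (haS : ∀ n, a (n + 1) = a n + 2 ^ n + 1)
    (X : ℕ → Bool)
    (S : ∀ n : ℕ, Finset ({ m : ℕ // m ∈ Set.Ico (a n) (a (n + 1)) } → Bool))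
    (hcard : ∀ n, (S n).card ≤ n)
    (hmem : ∀ n, 0 < n → (fun m => X m.1) ∈ S n) :
    ∃ i j : ℕ → ℕ, ∀ n, 0 < n →
      ∃ (hi : i n ∈ Set.Ico (a n) (a (n + 1))) (hj : j n ∈ Set.Ico (a n) (a (n + 1))),
        i n < j n ∧
        (∀ z ∈ S n, z ⟨i n, hi⟩ = z ⟨j n, hj⟩) ∧
        {m : ℕ | X m = true} ∩ {i n, j n} ≠ ({i n} : Set ℕ) := by
  have H : ∀ n, ∃ i j : ℕ, 0 < n →
      ∃ (hi : i ∈ Set.Ico (a n) (a (n + 1))) (hj : j ∈ Set.Ico (a n) (a (n + 1))),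
        i < j ∧
        (∀ z ∈ S n, z ⟨i, hi⟩ = z ⟨j, hj⟩) ∧
        {m : ℕ | X m = true} ∩ {i, j} ≠ ({i} : Set ℕ) := by
    intro n
    by_cases hn : 0 < n
    swap
    · exact ⟨0, 0, fun h => absurd h hn⟩
    -- pigeonhole
    set f : ℕ → ({z // z ∈ S n} → Bool) := fun m z =>
      if h : m ∈ Set.Ico (a n) (a (n + 1)) then z.1 ⟨m, h⟩ else false with hf
    have hcardIco : (Finset.Ico (a n) (a (n + 1))).card = 2 ^ n + 1 := by
      rw [Nat.card_Ico, haS n, Nat.add_assoc, Nat.add_sub_cancel_left]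
    have hlt : Fintype.card ({z // z ∈ S n} → Bool) <
        (Finset.Ico (a n) (a (n + 1))).card := by
      rw [hcardIco, Fintype.card_fun, Fintype.card_bool, Fintype.card_coe]
      calc 2 ^ (S n).card ≤ 2 ^ n := Nat.pow_le_pow_right (by norm_num) (hcard n)
        _ < 2 ^ n + 1 := Nat.lt_succ_self _
    obtain ⟨i, hi, j, hj, hne, heq⟩ :=
      Finset.exists_ne_map_eq_of_card_lt_of_maps_to hlt
        (fun x _ => Finset.mem_univ (f x))
    rcases Ne.lt_or_gt hne with hij | hij
    case _ =>
      refine ⟨i, j, fun _ => ?_⟩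
      rw [Finset.mem_Ico] at hi hj
      have hi' : i ∈ Set.Ico (a n) (a (n + 1)) := hi
      have hj' : j ∈ Set.Ico (a n) (a (n + 1)) := hj
      have hag : ∀ z ∈ S n, z ⟨i, hi'⟩ = z ⟨j, hj'⟩ := by
        intro z hz
        have := congrFun heq ⟨z, hz⟩
        simp only [hf] at this
        rwa [dif_pos hi', dif_pos hj'] at this
      refine ⟨hi', hj', hij, hag, ?_⟩
      have hXij : X i = X j := hag _ (hmem n hn)
      intro hset
      have hiX : X i = true := by
        have : i ∈ {m : ℕ | X m = true} ∩ {i, j} := by rw [hset]; rfl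
        exact this.1
      have hjmem : j ∈ {m : ℕ | X m = true} ∩ {i, j} :=
        ⟨by simp [Set.mem_setOf_eq, ← hXij, hiX], by simp⟩
      rw [hset] at hjmem
      exact absurd hjmem.symm (Nat.ne_of_lt hij)
    case _ =>
      refine ⟨j, i, fun _ => ?_⟩
      rw [Finset.mem_Ico] at hi hj
      have hi' : i ∈ Set.Ico (a n) (a (n + 1)) := hi
      have hj' : j ∈ Set.Ico (a n) (a (n + 1)) := hj
      have hag : ∀ z ∈ S n, z ⟨j, hj'⟩ = z ⟨i, hi'⟩ := by
        intro z hz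
        have := congrFun heq ⟨z, hz⟩
        simp only [hf] at this
        rw [dif_pos hi', dif_pos hj'] at this
        exact this.symm
      refine ⟨hj', hi', hij, hag, ?_⟩
      have hXij : X j = X i := hag _ (hmem n hn)
      intro hset
      have hiX : X j = true := by
        have : j ∈ {m : ℕ | X m = true} ∩ {j, i} := by rw [hset]; rfl
        exact this.1
      have hjmem : i ∈ {m : ℕ | X m = true} ∩ {j, i} :=
        ⟨by simp [Set.mem_setOf_eq, ← hXij, hiX], by simp⟩
      rw [hset] at hjmem
      exact absurd hjmem.symm (Nat.ne_of_lt hij)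
  choose i j hij using H
  exact ⟨i, j, hij⟩
end
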